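/- Let n, t, m be integers with 2 ≤ t ≤ n - 1 and C(n-t,2) + t(n-t) ≤ m ≤ C(n-t,2) + t(n-t) + (t-2). Let G be any graph on n vertices obtained from the complete (n-t+1)-partite graph with n - t vertex classes of size 1 and one vertex class W of size t by adding m - C(n-t,2) - t(n-t) additional edges (at most t - 2 of them) inside W. Then mc(G) = m - t + 1. -/

import Mathlib

/-- An edge-coloring `c` of a graph `G` is a *monochromatic connection coloring*
(MC-coloring) if any two vertices are joined by a path all of whose edges
receive the same color. -/
def IsMCColoring {V : Type*} (G : SimpleGraph V) (c : Sym2 V → ℕ) : Prop :=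
  ∀ u v : V, ∃ p : G.Walk u v, p.IsPath ∧ ∃ k : ℕ, ∀ e ∈ p.edges, c e = k

/-- The *monochromatic connection number* `mc(G)`: the maximum number of colors
used in an MC-coloring of `G`. -/
noncomputable def mcNumber {V : Type*} (G : SimpleGraph V) : ℕ :=
  sSup {k | ∃ c : Sym2 V → ℕ, IsMCColoring G c ∧ (c '' G.edgeSet).ncard = k}

section MCHelpers

open Finset

private lemma two_mul_choose_two (k : ℕ) : 2 * k.choose 2 = k * (k - 1) := by
  induction k with
  | zero => rfl
  | succ n ih =>
    rw [Nat.choose_succ_succ, Nat.mul_add, ih, Nat.choose_one_right]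
    cases n with
    | zero => rfl
    | succ p => simp only [Nat.succ_sub_one]; ring

private lemma choose_split (a t : ℕ) :
    a.choose 2 + t * a + t.choose 2 = (a + t).choose 2 := by
  have h1 := two_mul_choose_two a
  have h2 := two_mul_choose_two t
  have h3 := two_mul_choose_two (a + t)
  have key : a * (a - 1) + 2 * (t * a) + t * (t - 1) = (a + t) * ((a + t) - 1) := by
    rcases a with _ | p
    · simp
    rcases t with _ | q
    · simp
    have e1 : p + 1 + (q + 1) = (p + q + 1) + 1 := by ring
    rw [e1, Nat.add_sub_cancel, Nat.add_sub_cancel, Nat.add_sub_cancel]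
    ring
  linarith

private lemma reachable_fromEdgeSet {V : Type*} {G : SimpleGraph V} {F : Set (Sym2 V)}
    {u v : V} (p : G.Walk u v) (hp : ∀ e ∈ p.edges, e ∈ F) :
    (SimpleGraph.fromEdgeSet F).Reachable u v := by
  induction p with
  | nil => exact SimpleGraph.Reachable.refl _
  | cons h q ih =>
    refine SimpleGraph.Reachable.trans (SimpleGraph.Adj.reachable ?_) (ih ?_)
    · rw [SimpleGraph.fromEdgeSet_adj]
      exact ⟨hp _ (by simp), h.ne⟩
    · intro e he
      exact hp e (by simp [he])

private lemma exists_adj_dist_lt {V : Type*} {H : SimpleGraph V} {v r : V}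
    (hr : H.Reachable v r) (hne : v ≠ r) :
    ∃ w, H.Adj v w ∧ H.dist w r < H.dist v r := by
  obtain ⟨p, hp⟩ := hr.exists_walk_length_eq_dist
  cases p with
  | nil => exact absurd rfl hne
  | @cons _ w _ h q =>
    refine ⟨w, h, lt_of_le_of_lt (SimpleGraph.dist_le q) ?_⟩
    rw [← hp, SimpleGraph.Walk.length_cons]
    omega

private lemma exists_toward {V : Type*} (H : SimpleGraph V) (r : V) (C : Finset V)
    (hC : ∀ v ∈ C, H.Reachable v r) (hr : r ∉ C) :
    ∃ w : V → V, ∀ v ∈ C, H.Adj v (w v) ∧ H.dist (w v) r < H.dist v r := by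
  have hstep : ∀ v : V, ∃ x, v ∈ C → H.Adj v x ∧ H.dist x r < H.dist v r := by
    intro v
    by_cases hv : v ∈ C
    · obtain ⟨x, hx⟩ := exists_adj_dist_lt (hC v hv) (fun h => hr (h ▸ hv))
      exact ⟨x, fun _ => hx⟩
    · exact ⟨v, fun h => absurd h hv⟩
  choose w hw using hstep
  exact ⟨w, fun v hv => hw v hv⟩

private lemma sym2_inj_of_dist {V : Type*} (H : SimpleGraph V) (r : V) (w : V → V)
    (C : Finset V) (hd : ∀ v ∈ C, H.dist (w v) r < H.dist v r) :
    ∀ v ∈ C, ∀ v' ∈ C, s(v, w v) = s(v', w v') → v = v' := by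
  intro v hv v' hv' h
  rw [Sym2.eq_iff] at h
  rcases h with ⟨h1, _⟩ | ⟨h1, h2⟩
  · exact h1
  · exfalso
    have d1 := hd v hv
    have d2 := hd v' hv'
    rw [h2] at d1
    rw [← h1] at d2
    omega


private lemma inside_bound {V : Type*} [Fintype V] [DecidableEq V]
    (n m t : ℕ) (ht : 2 ≤ t) (htn : t + 1 ≤ n) (hn : n = Fintype.card V)
    (h2 : m ≤ (n - t).choose 2 + t * (n - t) + (t - 2))
    (W : Finset V) (hW : W.card = t) (G : SimpleGraph V) [Fintype G.edgeSet]
    (hm : m = G.edgeFinset.card)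
    (hcross : ∀ u v : V, u ≠ v → (u ∉ W ∨ v ∉ W) → G.Adj u v) :
    ((G.edgeFinset).filter (fun e => ∀ x ∈ e, x ∈ W)).card ≤ t - 2 := by
  classical
  set E := G.edgeFinset with hE
  set P : Sym2 V → Prop := fun e => ∀ x ∈ e, x ∈ W with hP
  have hsplitE : (E.filter (fun e => P e)).card + (E.filter (fun e => ¬ P e)).card = E.card :=
    Finset.card_filter_add_card_filter_not _
  -- the "outside" pairs are all edges
  set AllP : Finset (Sym2 V) := univ.filter (fun e => ¬ e.IsDiag) with hAllP
  set InP : Finset (Sym2 V) := univ.filter (fun e => ¬ e.IsDiag ∧ P e) with hInP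
  set OutP : Finset (Sym2 V) := univ.filter (fun e => ¬ e.IsDiag ∧ ¬ P e) with hOutP
  have hOutPsub : OutP ⊆ E.filter (fun e => ¬ P e) := by
    intro e he
    rw [hOutP, Finset.mem_filter] at he
    obtain ⟨-, hnd, hnp⟩ := he
    induction e with
    | _ a b =>
      have hab : a ≠ b := by simpa using hnd
      have : a ∉ W ∨ b ∉ W := by
        by_contra hcon
        push_neg at hcon
        exact hnp (fun x hx => by rcases Sym2.mem_iff.mp hx with h | h <;> simp [h, hcon.1, hcon.2])
      refine Finset.mem_filter.mpr ⟨?_, hnp⟩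
      rw [hE, SimpleGraph.mem_edgeFinset, SimpleGraph.mem_edgeSet]
      exact hcross a b hab this
  have hOutPcard : AllP.card = InP.card + OutP.card := by
    rw [hAllP, hInP, hOutP]
    rw [← Finset.card_filter_add_card_filter_not (s := univ.filter (fun e : Sym2 V => ¬ e.IsDiag)) (p := P)]
    congr 1 <;> rw [Finset.filter_filter]
  have hAllPcard : AllP.card = n.choose 2 := by
    rw [hn, ← Sym2.card_subtype_not_diag]
    rw [Fintype.card_subtype]
  -- |InP| ≤ t.choose 2
  have hInPcard : 2 * InP.card ≤ t * t - t := by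
    have hmaps : ∀ p ∈ W.offDiag, s(p.1, p.2) ∈ InP := by
      intro p hp
      rw [Finset.mem_offDiag] at hp
      refine Finset.mem_filter.mpr ⟨Finset.mem_univ _, by simpa using hp.2.2, ?_⟩
      intro x hx
      rcases Sym2.mem_iff.mp hx with h | h <;> simp [h, hp.1, hp.2.1]
    have hsub : InP ⊆ W.offDiag.image (fun p => s(p.1, p.2)) := by
      intro e he
      rw [hInP, Finset.mem_filter] at he
      obtain ⟨-, hnd, hpe⟩ := he
      induction e with
      | _ a b =>
        refine Finset.mem_image.mpr ⟨(a, b), ?_, rfl⟩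
        rw [Finset.mem_offDiag]
        exact ⟨hpe a (by simp), hpe b (by simp), by simpa using hnd⟩
    have hmul : 2 * (W.offDiag.image (fun p => s(p.1, p.2))).card ≤ W.offDiag.card := by
      refine Finset.mul_card_image_le_card (f := fun p : V × V => s(p.1, p.2)) W.offDiag 2 ?_
      intro b hb
      obtain ⟨p, hp, rfl⟩ := Finset.mem_image.mp hb
      rw [Finset.mem_offDiag] at hp
      have hsub2 : {(p.1, p.2), (p.2, p.1)} ⊆ W.offDiag.filter (fun q => s(q.1, q.2) = s(p.1, p.2)) := by
        intro q hq
        rcases Finset.mem_insert.mp hq with rfl | hq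
        · exact Finset.mem_filter.mpr ⟨Finset.mem_offDiag.mpr ⟨hp.1, hp.2.1, hp.2.2⟩, rfl⟩
        · rw [Finset.mem_singleton] at hq
          subst hq
          exact Finset.mem_filter.mpr ⟨Finset.mem_offDiag.mpr ⟨hp.2.1, hp.1, (Ne.symm hp.2.2)⟩, Sym2.eq_swap⟩
      have h2card : ({(p.1, p.2), (p.2, p.1)} : Finset (V × V)).card = 2 := by
        rw [Finset.card_insert_of_notMem, Finset.card_singleton]
        simp only [Finset.mem_singleton]
        intro h
        exact hp.2.2 (congrArg Prod.fst h)
      calc 2 = ({(p.1, p.2), (p.2, p.1)} : Finset (V × V)).card := h2card.symm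
        _ ≤ _ := Finset.card_le_card hsub2
    have := Finset.card_le_card hsub
    have hod := Finset.offDiag_card W
    rw [hW] at hod
    omega
  have hchoose : 2 * t.choose 2 = t * t - t := by
    have := two_mul_choose_two t
    cases t with
    | zero => simp
    | succ u =>
      rw [this, Nat.succ_sub_one]
      have : (u + 1) * (u + 1) - (u + 1) = (u + 1) * u := by
        have : (u + 1) * (u + 1) = (u + 1) * u + (u + 1) := by ring
        omega
      omega
  have hid : (n - t).choose 2 + t * (n - t) + t.choose 2 = n.choose 2 := by
    have hc := choose_split (n - t) t
    rwa [Nat.sub_add_cancel (by omega : t ≤ n)] at hc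
  have hOsub : OutP.card ≤ (E.filter (fun e => ¬ P e)).card := Finset.card_le_card hOutPsub
  show (E.filter (fun e => P e)).card ≤ t - 2
  generalize hA : t * (n - t) = A at h2 hid
  generalize hB : t * t = B at hInPcard hchoose
  omega

private lemma lower_bound {V : Type*} [Fintype V] [DecidableEq V] (t : ℕ) (ht : 2 ≤ t)
    (W : Finset V) (hW : W.card = t) (hlt : W.card < Fintype.card V)
    (G : SimpleGraph V) [Fintype G.edgeSet]
    (hcross : ∀ u v : V, u ≠ v → (u ∉ W ∨ v ∉ W) → G.Adj u v) :
    ∃ c : Sym2 V → ℕ, IsMCColoring G c ∧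
      (G.edgeFinset.image c).card = G.edgeFinset.card - t + 1 := by
  classical
  obtain ⟨u₀, hu₀⟩ : ∃ u₀, u₀ ∉ W := by
    by_contra hcon
    push_neg at hcon
    have : (univ : Finset V) ⊆ W := fun x _ => hcon x
    have := Finset.card_le_card this
    rw [Finset.card_univ] at this
    omega
  set E := G.edgeFinset with hE
  set S : Finset (Sym2 V) := W.image (fun w => s(u₀, w)) with hS
  have hScard : S.card = t := by
    rw [hS, Finset.card_image_of_injOn, hW]
    intro a _ b _ hab
    exact Sym2.congr_right.mp hab
  have hSE : S ⊆ E := by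
    intro e he
    obtain ⟨w, hw, rfl⟩ := Finset.mem_image.mp he
    rw [hE, SimpleGraph.mem_edgeFinset, SimpleGraph.mem_edgeSet]
    exact hcross u₀ w (fun h => hu₀ (h ▸ hw)) (Or.inl hu₀)
  set ι : Sym2 V → ℕ := fun e => ((Fintype.equivFin (Sym2 V)) e : ℕ) with hι
  set c : Sym2 V → ℕ := fun e => if e ∈ S then 0 else ι e + 1 with hc
  have hcS : ∀ e ∈ S, c e = 0 := fun e he => by simp [hc, he]
  refine ⟨c, ?_, ?_⟩
  · -- MC coloring
    intro u v
    rcases eq_or_ne u v with rfl | hne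
    · exact ⟨SimpleGraph.Walk.nil, SimpleGraph.Walk.IsPath.nil, 0, by simp⟩
    by_cases hadj : G.Adj u v
    · refine ⟨SimpleGraph.Walk.cons hadj SimpleGraph.Walk.nil, ?_, c s(u, v), ?_⟩
      · simp [SimpleGraph.Walk.cons_isPath_iff, hne]
      · intro e he
        simp only [SimpleGraph.Walk.edges_cons, SimpleGraph.Walk.edges_nil,
          List.mem_singleton] at he
        rw [he]
    · have hWuv : u ∈ W ∧ v ∈ W := by
        by_contra hcon
        push_neg at hcon
        rcases Decidable.em (u ∈ W) with hu | hu
        · exact hadj (hcross u v hne (Or.inr (hcon hu)))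
        · exact hadj (hcross u v hne (Or.inl hu))
      have h1 : G.Adj u u₀ := hcross u u₀ (fun h => hu₀ (h ▸ hWuv.1)) (Or.inr hu₀)
      have h2 : G.Adj u₀ v := hcross u₀ v (fun h => hu₀ (h.symm ▸ hWuv.2)) (Or.inl hu₀)
      refine ⟨SimpleGraph.Walk.cons h1 (SimpleGraph.Walk.cons h2 SimpleGraph.Walk.nil), ?_, 0, ?_⟩
      · simp [SimpleGraph.Walk.cons_isPath_iff, hne, h1.ne, h2.ne]
      · intro e he
        simp only [SimpleGraph.Walk.edges_cons, SimpleGraph.Walk.edges_nil,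
          List.mem_cons, List.mem_singleton, List.not_mem_nil, or_false] at he
        rcases he with rfl | rfl
        · refine hcS _ ?_
          rw [Sym2.eq_swap]
          exact Finset.mem_image_of_mem _ hWuv.1
        · exact hcS _ (Finset.mem_image_of_mem _ hWuv.2)
  · -- count colors
    have hEsplit : S ∪ (E \ S) = E := Finset.union_sdiff_of_subset hSE
    have himg : E.image c = (S.image c) ∪ ((E \ S).image c) := by
      rw [← Finset.image_union, hEsplit]
    have himgS : S.image c = {0} := by
      apply Finset.eq_singleton_iff_unique_mem.mpr
      constructor
      · obtain ⟨w, hw⟩ := Finset.card_pos.mp (by omega : 0 < W.card)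
        exact Finset.mem_image.mpr ⟨s(u₀, w), Finset.mem_image_of_mem _ hw,
          hcS _ (Finset.mem_image_of_mem _ hw)⟩
      · intro x hx
        obtain ⟨e, he, rfl⟩ := Finset.mem_image.mp hx
        exact hcS e he
    have himgD : ((E \ S).image c).card = (E \ S).card := by
      apply Finset.card_image_of_injOn
      intro a ha b hb hab
      rw [Finset.mem_coe, Finset.mem_sdiff] at ha hb
      simp only [hc, if_neg ha.2, if_neg hb.2] at hab
      have : ι a = ι b := by omega
      exact (Fintype.equivFin (Sym2 V)).injective (Fin.val_injective this)
    have hnot0 : (0 : ℕ) ∉ (E \ S).image c := by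
      intro h
      obtain ⟨e, he, hce⟩ := Finset.mem_image.mp h
      rw [Finset.mem_sdiff] at he
      simp [hc, if_neg he.2] at hce
    rw [himg, himgS]
    rw [← Finset.insert_eq, Finset.card_insert_of_notMem hnot0, himgD,
      Finset.card_sdiff_of_subset hSE, hScard]

private lemma upper_bound {V : Type*} [Fintype V] [DecidableEq V] (t : ℕ) (ht : 2 ≤ t)
    (W : Finset V) (hW : W.card = t)
    (G : SimpleGraph V) [Fintype G.edgeSet]
    (hinside : ((G.edgeFinset).filter (fun e => ∀ x ∈ e, x ∈ W)).card ≤ t - 2)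
    (c : Sym2 V → ℕ) (hc : IsMCColoring G c) :
    t - 1 + (G.edgeFinset.image c).card ≤ G.edgeFinset.card := by
  classical
  set E := G.edgeFinset with hE
  set K := E.image c with hK
  set Fib : ℕ → Finset (Sym2 V) := fun k => E.filter (fun e => c e = k) with hFib
  have hsum : E.card = ∑ k ∈ K, (Fib k).card :=
    Finset.card_eq_sum_card_fiberwise (fun e he => Finset.mem_image_of_mem c he)
  have hfib_pos : ∀ k ∈ K, 1 ≤ (Fib k).card := by
    intro k hk
    obtain ⟨e, he, rfl⟩ := Finset.mem_image.mp hk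
    exact Finset.card_pos.mpr ⟨e, Finset.mem_filter.mpr ⟨he, rfl⟩⟩
  have hmemK : ∀ k, (Fib k).Nonempty → k ∈ K := by
    rintro k ⟨e, he⟩
    have h2 := Finset.mem_filter.mp he
    exact h2.2 ▸ Finset.mem_image_of_mem c h2.1
  suffices hwaste : t - 1 ≤ ∑ k ∈ K, ((Fib k).card - 1) by
    have h1 : ∑ k ∈ K, ((Fib k).card - 1) + K.card ≤ E.card := by
      have h2 : ∑ k ∈ K, ((Fib k).card - 1) + ∑ _k ∈ K, 1 = ∑ k ∈ K, (((Fib k).card - 1) + 1) :=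
        (Finset.sum_add_distrib).symm
      have h3 : ∑ k ∈ K, (((Fib k).card - 1) + 1) = ∑ k ∈ K, (Fib k).card :=
        Finset.sum_congr rfl (fun k hk => by have := hfib_pos k hk; omega)
      have h4 : ∑ _k ∈ K, (1 : ℕ) = K.card := by simp
      omega
    omega
  -- the subgraphs spanned by each color class
  set H : ℕ → SimpleGraph V := fun k => SimpleGraph.fromEdgeSet ↑(Fib k) with hH
  have hHsub : ∀ k u v, (H k).Adj u v → s(u, v) ∈ Fib k := by
    intro k u v h
    rw [hH, SimpleGraph.fromEdgeSet_adj] at h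
    exact h.1
  by_cases hcase : ∃ k, ∃ w₀ ∈ W, ∀ w ∈ W, (H k).Reachable w w₀
  · -- Case 1 : some color connects all of W
    obtain ⟨k, w₀, hw₀W, hreach⟩ := hcase
    set C : Finset V := (univ.filter (fun v => (H k).Reachable v w₀)).erase w₀ with hC
    have hCreach : ∀ v ∈ C, (H k).Reachable v w₀ := fun v hv =>
      (Finset.mem_filter.mp (Finset.mem_of_mem_erase hv)).2
    have hw₀C : w₀ ∉ C := Finset.notMem_erase _ _
    obtain ⟨w, hw⟩ := exists_toward (H k) w₀ C hCreach hw₀C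
    have hinj : ∀ v ∈ C, ∀ v' ∈ C, s(v, w v) = s(v', w v') → v = v' :=
      sym2_inj_of_dist (H k) w₀ w C (fun v hv => (hw v hv).2)
    have hmapsFib : ∀ v ∈ C, s(v, w v) ∈ Fib k := fun v hv => hHsub k _ _ (hw v hv).1
    have hWsub : W.erase w₀ ⊆ C := by
      intro x hx
      rw [Finset.mem_erase] at hx
      exact Finset.mem_erase.mpr
        ⟨hx.1, Finset.mem_filter.mpr ⟨Finset.mem_univ _, hreach x hx.2⟩⟩
    by_cases hsubW : ∀ v, (H k).Reachable v w₀ → v ∈ W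
    · exfalso
      have hmapsIn : ∀ v ∈ C, s(v, w v) ∈ E.filter (fun e => ∀ x ∈ e, x ∈ W) := by
        intro v hv
        have hfk := hmapsFib v hv
        refine Finset.mem_filter.mpr ⟨(Finset.mem_filter.mp hfk).1, ?_⟩
        intro x hx
        rcases Sym2.mem_iff.mp hx with h | h
        · rw [h]; exact hsubW _ (hCreach v hv)
        · rw [h]; exact hsubW _ (((hw v hv).1.symm.reachable).trans (hCreach v hv))
      have hCt : C.card ≤ t - 2 := by
        refine le_trans (Finset.card_le_card_of_injOn _ hmapsIn ?_) hinside
        exact fun a ha b hb hab => hinj a (Finset.mem_coe.mp ha) b (Finset.mem_coe.mp hb) hab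
      have hCt2 : t - 1 ≤ C.card := by
        have h5 := Finset.card_le_card hWsub
        rwa [Finset.card_erase_of_mem hw₀W, hW] at h5
      omega
    · push_neg at hsubW
      obtain ⟨x, hxr, hxW⟩ := hsubW
      have hxC : x ∈ C := Finset.mem_erase.mpr
        ⟨fun h => hxW (h ▸ hw₀W), Finset.mem_filter.mpr ⟨Finset.mem_univ _, hxr⟩⟩
      have hins : insert x (W.erase w₀) ⊆ C := by
        intro y hy
        rcases Finset.mem_insert.mp hy with rfl | hy
        · exact hxC
        · exact hWsub hy
      have hcard2 : t ≤ C.card := by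
        have h5 := Finset.card_le_card hins
        rw [Finset.card_insert_of_notMem (fun h => hxW (Finset.mem_of_mem_erase h)),
          Finset.card_erase_of_mem hw₀W, hW] at h5
        omega
      have hcardC : C.card ≤ (Fib k).card :=
        Finset.card_le_card_of_injOn _ hmapsFib
          (fun a ha b hb hab => hinj a (Finset.mem_coe.mp ha) b (Finset.mem_coe.mp hb) hab)
      have hCne : C.Nonempty := Finset.card_pos.mp (by omega)
      obtain ⟨v₀, hv₀⟩ := hCne
      have hkK : k ∈ K := hmemK k ⟨_, hmapsFib v₀ hv₀⟩
      have hsingle : (Fib k).card - 1 ≤ ∑ k ∈ K, ((Fib k).card - 1) :=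
        Finset.single_le_sum (f := fun k => (Fib k).card - 1) (fun i _ => Nat.zero_le _) hkK
      omega
  · -- Case 2
    push_neg at hcase
    set Bad : Finset (V × V) := W.offDiag.filter (fun p => ¬ G.Adj p.1 p.2) with hBad
    have hoffsplit : (W.offDiag.filter (fun p => G.Adj p.1 p.2)).card + Bad.card
        = W.offDiag.card := by
      rw [hBad]
      exact Finset.card_filter_add_card_filter_not _
    have hAdjP : (W.offDiag.filter (fun p => G.Adj p.1 p.2)).card ≤ 2 * (t - 2) := by
      have hmaps : ∀ p ∈ W.offDiag.filter (fun p => G.Adj p.1 p.2),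
          (fun p : V × V => s(p.1, p.2)) p ∈ E.filter (fun e => ∀ x ∈ e, x ∈ W) := by
        intro p hp
        rw [Finset.mem_filter, Finset.mem_offDiag] at hp
        refine Finset.mem_filter.mpr ⟨?_, ?_⟩
        · rw [hE, SimpleGraph.mem_edgeFinset, SimpleGraph.mem_edgeSet]
          exact hp.2
        · intro x hx
          rcases Sym2.mem_iff.mp hx with h | h
          · rw [h]; exact hp.1.1
          · rw [h]; exact hp.1.2.1
      have hfib2 : ∀ e ∈ E.filter (fun e => ∀ x ∈ e, x ∈ W),
          ((W.offDiag.filter (fun p => G.Adj p.1 p.2)).filter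
            (fun p => (fun p : V × V => s(p.1, p.2)) p = e)).card ≤ 2 := by
        intro e _
        induction e with
        | _ a b =>
          have hsub2 : ((W.offDiag.filter (fun p => G.Adj p.1 p.2)).filter
              (fun p => (fun p : V × V => s(p.1, p.2)) p = s(a, b))) ⊆ {(a, b), (b, a)} := by
            intro q hq
            rw [Finset.mem_filter] at hq
            have h2 : s(q.1, q.2) = s(a, b) := hq.2
            rw [Sym2.eq_iff] at h2
            rcases h2 with ⟨h1, h2⟩ | ⟨h1, h2⟩
            · exact Finset.mem_insert.mpr (Or.inl (Prod.ext h1 h2))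
            · refine Finset.mem_insert.mpr (Or.inr ?_)
              rw [Finset.mem_singleton]
              exact Prod.ext h1 h2
          exact le_trans (Finset.card_le_card hsub2)
            (le_trans (Finset.card_insert_le _ _) (by simp))
      have h21 := Finset.card_le_mul_card_image_of_maps_to hmaps 2 hfib2
      calc (W.offDiag.filter (fun p => G.Adj p.1 p.2)).card
          ≤ 2 * (E.filter (fun e => ∀ x ∈ e, x ∈ W)).card := h21
        _ ≤ 2 * (t - 2) := Nat.mul_le_mul_left 2 hinside
    have hchoice : ∀ p : V × V, ∃ k, p ∈ Bad →
        ((H k).Reachable p.1 p.2 ∧ (Fib k).Nonempty) := by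
      rintro ⟨u, v⟩
      by_cases hp : (u, v) ∈ Bad
      · obtain ⟨pth, hpath, k, hk⟩ := hc u v
        have hne : u ≠ v := by
          rw [hBad, Finset.mem_filter, Finset.mem_offDiag] at hp
          exact hp.1.2.2
        have hedges : ∀ e ∈ pth.edges, e ∈ Fib k := by
          intro e he
          refine Finset.mem_filter.mpr ⟨?_, hk e he⟩
          rw [hE, SimpleGraph.mem_edgeFinset]
          exact pth.edges_subset_edgeSet he
        refine ⟨k, fun _ => ⟨?_, ?_⟩⟩
        · rw [hH]
          exact reachable_fromEdgeSet pth (fun e he => Finset.mem_coe.mpr (hedges e he))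
        · cases pth with
          | nil => exact absurd rfl hne
          | @cons _ mid _ h q' =>
            refine ⟨s(u, mid), Finset.mem_filter.mpr ⟨?_, hk s(u, mid) (by simp)⟩⟩
            rw [hE, SimpleGraph.mem_edgeFinset]
            exact SimpleGraph.Walk.edges_subset_edgeSet (SimpleGraph.Walk.cons h q') (by simp)
      · exact ⟨0, fun h => absurd h hp⟩
    choose col hcol using hchoice
    set K₂ := Bad.image col with hK₂
    have hBadsum : Bad.card = ∑ k ∈ K₂, (Bad.filter (fun p => col p = k)).card :=
      Finset.card_eq_sum_card_fiberwise (fun p hp => Finset.mem_image_of_mem col hp)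
    have hK₂K : K₂ ⊆ K := by
      intro k hk
      obtain ⟨p, hp, rfl⟩ := Finset.mem_image.mp hk
      exact hmemK _ (hcol p hp).2
    have hperc : ∀ k ∈ K₂,
        (Bad.filter (fun p => col p = k)).card ≤ (t - 1) * ((Fib k).card - 1) := by
      intro k hk
      obtain ⟨p₀, hp₀Bad, hp₀col⟩ := Finset.mem_image.mp hk
      set R : V → V := fun v => ((H k).connectedComponentMk v).out with hRdef
      have hRreach : ∀ v, (H k).Reachable (R v) v := by
        intro v
        apply SimpleGraph.ConnectedComponent.exact
        exact Quot.out_eq _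
      have hReq : ∀ u v, (H k).Reachable u v ↔ R u = R v := by
        intro u v
        constructor
        · intro h
          exact congrArg Quot.out (SimpleGraph.ConnectedComponent.sound h)
        · intro h
          exact ((hRreach u).symm).trans (h ▸ hRreach v)
      have hRidem : ∀ v, R (R v) = R v := fun v => ((hReq _ _).mp (hRreach v))
      set RB : Finset (V × V) := Bad.filter (fun p => (H k).Reachable p.1 p.2) with hRB
      have hBfibRB : Bad.filter (fun p => col p = k) ⊆ RB := by
        intro p hp
        rw [Finset.mem_filter] at hp
        exact Finset.mem_filter.mpr ⟨hp.1, hp.2 ▸ (hcol p hp.1).1⟩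
      refine le_trans (Finset.card_le_card hBfibRB) ?_
      have hRBne : RB.Nonempty :=
        ⟨p₀, Finset.mem_filter.mpr ⟨hp₀Bad, hp₀col ▸ (hcol p₀ hp₀Bad).1⟩⟩
      set Active : Finset V := RB.image (fun p => R p.1) with hActive
      have hActivene : Active.Nonempty := hRBne.image _
      set Cr : V → Finset V := fun r => (univ.filter (fun v => R v = r)).erase r with hCrdef
      have hCrmem : ∀ r v, v ∈ Cr r ↔ (R v = r ∧ v ≠ r) := by
        intro r v
        rw [hCrdef]
        simp only [Finset.mem_erase, Finset.mem_filter, Finset.mem_univ, true_and]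
        tauto
      have hwf : ∀ r : V, ∃ wfr : V → V, ∀ v ∈ Cr r,
          (H k).Adj v (wfr v) ∧ (H k).dist (wfr v) r < (H k).dist v r := by
        intro r
        apply exists_toward
        · intro v hv
          have h5 := (hCrmem r v).mp hv
          exact h5.1 ▸ (hRreach v).symm
        · rw [hCrdef]; exact Finset.notMem_erase _ _
      choose wf hwf using hwf
      have hwfR : ∀ r, ∀ v ∈ Cr r, R (wf r v) = r := by
        intro r v hv
        have h5 := (hReq v (wf r v)).mp ((hwf r v hv).1.reachable)
        rw [← h5, ((hCrmem r v).mp hv).1]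
      have hφFib : ∀ r, ∀ v ∈ Cr r, s(v, wf r v) ∈ Fib k :=
        fun r v hv => hHsub k _ _ (hwf r v hv).1
      have hccpos : ∀ r ∈ Active, 1 ≤ (Cr r).card := by
        intro r hr
        obtain ⟨p, hpRB, hpr⟩ := Finset.mem_image.mp hr
        rw [hRB, Finset.mem_filter, hBad, Finset.mem_filter, Finset.mem_offDiag] at hpRB
        have hne := hpRB.1.1.2.2
        have hR2 : R p.2 = r := by rw [← (hReq p.1 p.2).mp hpRB.2, hpr]
        rcases eq_or_ne p.1 r with h1 | h1
        · refine Finset.card_pos.mpr ⟨p.2, (hCrmem r p.2).mpr ⟨hR2, ?_⟩⟩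
          rw [← h1]; exact (Ne.symm hne)
        · exact Finset.card_pos.mpr ⟨p.1, (hCrmem r p.1).mpr ⟨hpr, h1⟩⟩
      set U : Finset V := univ.filter (fun v => R v ∈ Active ∧ v ≠ R v) with hU
      have hUCr : ∀ v ∈ U, v ∈ Cr (R v) := by
        intro v hv
        rw [hU, Finset.mem_filter] at hv
        exact (hCrmem _ v).mpr ⟨rfl, hv.2.2⟩
      have hUcard : U.card ≤ (Fib k).card := by
        apply Finset.card_le_card_of_injOn (fun v => s(v, wf (R v) v))
        · intro v hv
          exact hφFib (R v) v (hUCr v hv)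
        · intro v hv v' hv' hvv'
          have hv1 := hUCr v (Finset.mem_coe.mp hv)
          have hv'1 := hUCr v' (Finset.mem_coe.mp hv')
          simp only at hvv'
          rcases Sym2.eq_iff.mp hvv' with ⟨h1, -⟩ | ⟨h1, h2⟩
          · exact h1
          · have hr' : R v = R v' := by
              have h3 : R (wf (R v') v') = R v' := hwfR (R v') v' hv'1
              rw [h1, h3]
            rw [← hr'] at hv'1 hvv'
            exact sym2_inj_of_dist (H k) (R v) (wf (R v)) (Cr (R v))
              (fun x hx => (hwf (R v) x hx).2) v hv1 v' hv'1 hvv'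
      have hUsum : U.card = ∑ r ∈ Active, (Cr r).card := by
        rw [Finset.card_eq_sum_card_fiberwise (f := R) (t := Active)
          (fun v hv => (Finset.mem_filter.mp (Finset.mem_coe.mp hv)).2.1)]
        apply Finset.sum_congr rfl
        intro r hr
        congr 1
        ext v
        rw [Finset.mem_filter, hU, Finset.mem_filter, hCrmem r v]
        constructor
        · rintro ⟨⟨-, -, hne⟩, hRr⟩
          exact ⟨hRr, hRr ▸ hne⟩
        · rintro ⟨hRr, hne⟩
          refine ⟨⟨Finset.mem_univ _, ?_, ?_⟩, hRr⟩
          · rw [hRr]; exact hr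
          · rw [hRr]; exact hne
      have hperr : ∀ r ∈ Active,
          (RB.filter (fun p => R p.1 = r)).card ≤ (t - 1) * ((Cr r).card - 1) := by
        intro r hr
        obtain ⟨q, hqRB, hqr⟩ := Finset.mem_image.mp hr
        have hq1W : q.1 ∈ W := by
          rw [hRB, Finset.mem_filter, hBad, Finset.mem_filter, Finset.mem_offDiag] at hqRB
          exact hqRB.1.1.1
        set A : Finset V := W.filter (fun x => R x = r) with hAdef
        have hsubA : RB.filter (fun p => R p.1 = r) ⊆ A.offDiag := by
          intro p hp
          rw [Finset.mem_filter] at hp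
          have hpRB := hp.1
          rw [hRB, Finset.mem_filter] at hpRB
          have hpBad := hpRB.1
          rw [hBad, Finset.mem_filter, Finset.mem_offDiag] at hpBad
          refine Finset.mem_offDiag.mpr ⟨?_, ?_, hpBad.1.2.2⟩
          · exact Finset.mem_filter.mpr ⟨hpBad.1.1, hp.2⟩
          · refine Finset.mem_filter.mpr ⟨hpBad.1.2.1, ?_⟩
            rw [← (hReq p.1 p.2).mp hpRB.2, hp.2]
        have hsubACr : A ⊆ insert r (Cr r) := by
          intro x hx
          rw [hAdef, Finset.mem_filter] at hx
          rcases eq_or_ne x r with h | h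
          · exact Finset.mem_insert.mpr (Or.inl h)
          · exact Finset.mem_insert.mpr (Or.inr ((hCrmem r x).mpr ⟨hx.2, h⟩))
        have haT : A.card ≤ t - 1 := by
          obtain ⟨w', hw'W, hw'nr⟩ := hcase k q.1 hq1W
          have hsuber : A ⊆ W.erase w' := by
            intro x hx
            rw [hAdef, Finset.mem_filter] at hx
            refine Finset.mem_erase.mpr ⟨?_, hx.1⟩
            intro hxw'
            exact hw'nr ((hReq w' q.1).mpr (by rw [← hxw', hx.2, hqr]))
          have h22 := Finset.card_le_card hsuber
          rwa [Finset.card_erase_of_mem hw'W, hW] at h22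
        by_cases hout : ∀ x, R x = r → x ∈ W
        · have hAeq : A = insert r (Cr r) := by
            apply Finset.Subset.antisymm hsubACr
            intro x hx
            rcases Finset.mem_insert.mp hx with h | hx2
            · have hRr : R r = r := by rw [← hqr]; exact hRidem q.1
              rw [h]
              exact Finset.mem_filter.mpr ⟨hout r hRr, hRr⟩
            · have h7 := (hCrmem r x).mp hx2
              exact Finset.mem_filter.mpr ⟨hout x h7.1, h7.1⟩
          have hrCr : r ∉ Cr r := by rw [hCrdef]; exact Finset.notMem_erase _ _
          have hacc : A.card = (Cr r).card + 1 := by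
            rw [hAeq, Finset.card_insert_of_notMem hrCr]
          set AdjA : Finset (V × V) := A.offDiag.filter (fun p => G.Adj p.1 p.2) with hAdjAdef
          have hGadj : ∀ v ∈ Cr r, G.Adj v (wf r v) := by
            intro v hv
            have h8 := hφFib r v hv
            rw [hFib] at h8
            simp only [Finset.mem_filter] at h8
            rw [hE, SimpleGraph.mem_edgeFinset, SimpleGraph.mem_edgeSet] at h8
            exact h8.1
          have hwfA : ∀ v ∈ Cr r, wf r v ∈ A := by
            intro v hv
            exact Finset.mem_filter.mpr ⟨hout _ (hwfR r v hv), hwfR r v hv⟩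
          have hvA : ∀ v ∈ Cr r, v ∈ A := by
            intro v hv
            rw [hAeq]
            exact Finset.mem_insert.mpr (Or.inr hv)
          have hAdjAcard : 2 * (Cr r).card ≤ AdjA.card := by
            set ψ : V × Bool → V × V :=
              fun q => if q.2 = true then (wf r q.1, q.1) else (q.1, wf r q.1) with hψ
            have hmaps2 : ∀ q ∈ (Cr r) ×ˢ (univ : Finset Bool), ψ q ∈ AdjA := by
              intro q hq
              rw [Finset.mem_product] at hq
              have hv := hq.1
              have hadj := hGadj q.1 hv
              have h9 := hvA q.1 hv
              have h10 := hwfA q.1 hv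
              by_cases hb : q.2 = true
              · simp only [hψ, hb, if_true]
                exact Finset.mem_filter.mpr
                  ⟨Finset.mem_offDiag.mpr ⟨h10, h9, hadj.ne.symm⟩, hadj.symm⟩
              · simp only [hψ, hb, if_false]
                exact Finset.mem_filter.mpr
                  ⟨Finset.mem_offDiag.mpr ⟨h9, h10, hadj.ne⟩, hadj⟩
            have hinj2 : Set.InjOn ψ ↑((Cr r) ×ˢ (univ : Finset Bool)) := by
              intro q hqm q' hq'm heq
              rw [Finset.mem_coe, Finset.mem_product] at hqm hq'm
              have hv := hqm.1
              have hv' := hq'm.1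
              have hd := (hwf r q.1 hv).2
              have hd' := (hwf r q'.1 hv').2
              have hψt : ∀ z : V × Bool, z.2 = true → ψ z = (wf r z.1, z.1) := by
                intro z hz; rw [hψ]; simp [hz]
              have hψf : ∀ z : V × Bool, z.2 = false → ψ z = (z.1, wf r z.1) := by
                intro z hz; rw [hψ]; simp [hz]
              rcases Bool.eq_false_or_eq_true q.2 with hb | hb <;>
                rcases Bool.eq_false_or_eq_true q'.2 with hb' | hb'
              · rw [hψt q hb, hψt q' hb', Prod.mk.injEq] at heq
                exact Prod.ext heq.2 (hb.trans hb'.symm)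
              · rw [hψt q hb, hψf q' hb', Prod.mk.injEq] at heq
                have h1 : wf r q.1 = q'.1 := heq.1
                have h2 : q.1 = wf r q'.1 := heq.2
                have e1 : (H k).dist q.1 r = (H k).dist (wf r q'.1) r := by rw [h2]
                have e2 : (H k).dist (wf r q.1) r = (H k).dist q'.1 r := by rw [h1]
                omega
              · rw [hψf q hb, hψt q' hb', Prod.mk.injEq] at heq
                have h1 : q.1 = wf r q'.1 := heq.1
                have h2 : wf r q.1 = q'.1 := heq.2
                have e1 : (H k).dist q.1 r = (H k).dist (wf r q'.1) r := by rw [h1]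
                have e2 : (H k).dist (wf r q.1) r = (H k).dist q'.1 r := by rw [h2]
                omega
              · rw [hψf q hb, hψf q' hb', Prod.mk.injEq] at heq
                exact Prod.ext heq.1 (hb.trans hb'.symm)
            have hcard3 := Finset.card_le_card_of_injOn ψ hmaps2 hinj2
            rwa [Finset.card_product, Finset.card_univ, Fintype.card_bool, mul_comm] at hcard3
          have hdisj : Disjoint (RB.filter (fun p => R p.1 = r)) AdjA := by
            rw [Finset.disjoint_left]
            intro p hp hpA
            rw [Finset.mem_filter] at hp
            have h11 := hp.1
            rw [hRB, Finset.mem_filter, hBad, Finset.mem_filter] at h11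
            rw [hAdjAdef, Finset.mem_filter] at hpA
            exact h11.1.2 hpA.2
          have hunion : (RB.filter (fun p => R p.1 = r)).card + AdjA.card ≤ A.offDiag.card := by
            rw [← Finset.card_union_of_disjoint hdisj]
            apply Finset.card_le_card
            apply Finset.union_subset hsubA
            rw [hAdjAdef]; exact Finset.filter_subset _ _
          obtain ⟨d, hd⟩ : ∃ d, (Cr r).card = d + 1 :=
            ⟨(Cr r).card - 1, by have := hccpos r hr; omega⟩
          have hoffc : A.offDiag.card = (d + 2) * (d + 2) - (d + 2) := by
            rw [Finset.offDiag_card, hacc, hd]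
          have he1 : (d + 2) * (d + 2) - (d + 2) = (d + 1) * d + 2 * (d + 1) := by
            have h12 : (d + 2) * (d + 2) = ((d + 1) * d + 2 * (d + 1)) + (d + 2) := by ring
            generalize hY : (d + 2) * (d + 2) = Y at h12 ⊢
            generalize hX : (d + 1) * d = X at h12 ⊢
            omega
          have hfin : (RB.filter (fun p => R p.1 = r)).card ≤ (d + 1) * d := by
            rw [hoffc, he1] at hunion
            have h13 := hAdjAcard
            rw [hd] at h13
            generalize hX : (d + 1) * d = X at hunion ⊢
            omega
          have hle : d + 1 ≤ t - 1 := by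
            have h14 : A.card = d + 2 := by rw [hacc, hd]
            omega
          calc (RB.filter (fun p => R p.1 = r)).card ≤ (d + 1) * d := hfin
            _ ≤ (t - 1) * d := Nat.mul_le_mul_right d hle
            _ = (t - 1) * ((Cr r).card - 1) := by rw [hd]; simp
        · push_neg at hout
          obtain ⟨x, hxr, hxW⟩ := hout
          have hxA : x ∉ A := by
            intro h
            rw [hAdef, Finset.mem_filter] at h
            exact hxW h.1
          have hxin : x ∈ insert r (Cr r) := by
            rcases eq_or_ne x r with h | h
            · exact Finset.mem_insert.mpr (Or.inl h)
            · exact Finset.mem_insert.mpr (Or.inr ((hCrmem r x).mpr ⟨hxr, h⟩))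
          have hacc2 : A.card ≤ (Cr r).card := by
            have h14 : insert x A ⊆ insert r (Cr r) := by
              intro y hy
              rcases Finset.mem_insert.mp hy with h | hy
              · rw [h]; exact hxin
              · exact hsubACr hy
            have h15 := Finset.card_le_card h14
            rw [Finset.card_insert_of_notMem hxA] at h15
            have h16 : (insert r (Cr r)).card ≤ (Cr r).card + 1 := Finset.card_insert_le _ _
            omega
          have hsub5 := Finset.card_le_card hsubA
          rw [Finset.offDiag_card] at hsub5
          rcases Nat.eq_zero_or_pos A.card with h0 | hpos
          · rw [h0] at hsub5
            simp only [Nat.mul_zero, Nat.zero_sub, Nat.le_zero] at hsub5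
            rw [hsub5]
            exact Nat.zero_le _
          · obtain ⟨d, hd⟩ : ∃ d, A.card = d + 1 := ⟨A.card - 1, by omega⟩
            have he2 : (d + 1) * (d + 1) - (d + 1) = (d + 1) * d := by
              have h17 : (d + 1) * (d + 1) = (d + 1) * d + (d + 1) := by ring
              generalize hY : (d + 1) * (d + 1) = Y at h17 ⊢
              generalize hX : (d + 1) * d = X at h17 ⊢
              omega
            have hfin2 : (RB.filter (fun p => R p.1 = r)).card ≤ (d + 1) * d := by
              rw [hd, he2] at hsub5
              exact hsub5
            have hle2 : d + 1 ≤ t - 1 := by omega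
            have hled : d ≤ (Cr r).card - 1 := by
              have := hccpos r hr
              omega
            calc (RB.filter (fun p => R p.1 = r)).card ≤ (d + 1) * d := hfin2
              _ ≤ (t - 1) * ((Cr r).card - 1) := Nat.mul_le_mul hle2 hled
      have hRBsum : RB.card = ∑ r ∈ Active, (RB.filter (fun p => R p.1 = r)).card :=
        Finset.card_eq_sum_card_fiberwise (fun p hp => Finset.mem_image_of_mem _ hp)
      have hsum2 : RB.card ≤ (t - 1) * ∑ r ∈ Active, ((Cr r).card - 1) := by
        rw [hRBsum, Finset.mul_sum]
        exact Finset.sum_le_sum hperr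
      have hsum3 : ∑ r ∈ Active, ((Cr r).card - 1) + Active.card ≤ U.card := by
        rw [hUsum]
        have h18 : ∑ r ∈ Active, ((Cr r).card - 1) + ∑ _r ∈ Active, (1 : ℕ)
            = ∑ r ∈ Active, (((Cr r).card - 1) + 1) := (Finset.sum_add_distrib).symm
        have h19 : ∑ r ∈ Active, (((Cr r).card - 1) + 1) = ∑ r ∈ Active, (Cr r).card :=
          Finset.sum_congr rfl (fun r hr => by have := hccpos r hr; omega)
        have h20 : ∑ _r ∈ Active, (1 : ℕ) = Active.card := by simp
        omega
      have hA1 : 1 ≤ Active.card := Finset.card_pos.mpr hActivene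
      have hfinal : ∑ r ∈ Active, ((Cr r).card - 1) ≤ (Fib k).card - 1 := by omega
      calc RB.card ≤ (t - 1) * ∑ r ∈ Active, ((Cr r).card - 1) := hsum2
        _ ≤ (t - 1) * ((Fib k).card - 1) := Nat.mul_le_mul_left _ hfinal
    have hBadle : Bad.card ≤ (t - 1) * ∑ k ∈ K, ((Fib k).card - 1) := by
      rw [hBadsum]
      calc ∑ k ∈ K₂, (Bad.filter (fun p => col p = k)).card
          ≤ ∑ k ∈ K₂, (t - 1) * ((Fib k).card - 1) := Finset.sum_le_sum hperc
        _ = (t - 1) * ∑ k ∈ K₂, ((Fib k).card - 1) := (Finset.mul_sum _ _ _).symm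
        _ ≤ (t - 1) * ∑ k ∈ K, ((Fib k).card - 1) := Nat.mul_le_mul_left _
            (Finset.sum_le_sum_of_subset hK₂K)
    have hoffW : W.offDiag.card = t * t - t := by rw [Finset.offDiag_card, hW]
    by_contra hcon
    push_neg at hcon
    have hwle : ∑ k ∈ K, ((Fib k).card - 1) ≤ t - 2 := by omega
    have hmul : (t - 1) * ∑ k ∈ K, ((Fib k).card - 1) ≤ (t - 1) * (t - 2) :=
      Nat.mul_le_mul_left _ hwle
    obtain ⟨a, rfl⟩ : ∃ a, t = a + 2 := ⟨t - 2, by omega⟩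
    have hq1 : (a + 2) - 1 = a + 1 := by omega
    have hq2 : (a + 2) - 2 = a := by omega
    rw [hq1, hq2] at hmul
    rw [hq1] at hBadle
    rw [hq2] at hAdjP
    have hexp : (a + 2) * (a + 2) = ((a + 1) * a + 2 * a + (a + 2)) + 2 := by ring
    generalize hZ : (a + 1) * (∑ k ∈ K, ((Fib k).card - 1)) = Z at hBadle hmul
    generalize hX : (a + 1) * a = X at hmul hexp
    generalize hY : (a + 2) * (a + 2) = Y at hexp hoffW
    omega

end MCHelpers

/-- Any graph on `n` vertices obtained from the complete `(n-t+1)`-partite graph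
with `n - t` singleton classes and one class `W` of size `t` by adding at most
`t - 2` extra edges inside `W` (so that it has `m` edges in total, with
`C(n-t,2) + t(n-t) ≤ m ≤ C(n-t,2) + t(n-t) + (t-2)`) satisfies
`mc(G) = m - t + 1`. -/
theorem stmt_8 {V : Type*} [Fintype V] (n m t : ℕ)
    (ht : 2 ≤ t) (htn : t + 1 ≤ n) (hn : n = Fintype.card V)
    (h1 : (n - t).choose 2 + t * (n - t) ≤ m)
    (h2 : m ≤ (n - t).choose 2 + t * (n - t) + (t - 2))
    (W : Set V) (hW : W.ncard = t)
    (G : SimpleGraph V) (hm : m = G.edgeSet.ncard)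
    (hcross : ∀ u v : V, u ≠ v → (u ∉ W ∨ v ∉ W) → G.Adj u v) :
    (mcNumber G : ℤ) = (m : ℤ) - t + 1 := by
  classical
  letI : DecidableEq V := Classical.decEq V
  letI : DecidableRel G.Adj := fun _ _ => Classical.dec _
  have hWfin : W.Finite := Set.toFinite W
  set Wf : Finset V := hWfin.toFinset with hWfdef
  have hWfcard : Wf.card = t := by
    rw [hWfdef, ← Set.ncard_eq_toFinset_card W hWfin, hW]
  have hmemWf : ∀ x, x ∈ Wf ↔ x ∈ W := fun x => Set.Finite.mem_toFinset hWfin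
  have hcross' : ∀ u v : V, u ≠ v → (u ∉ Wf ∨ v ∉ Wf) → G.Adj u v := by
    intro u v huv h
    refine hcross u v huv ?_
    rcases h with h | h
    · exact Or.inl (fun hx => h ((hmemWf u).mpr hx))
    · exact Or.inr (fun hx => h ((hmemWf v).mpr hx))
  have hmE : m = G.edgeFinset.card := by
    rw [hm, ← SimpleGraph.coe_edgeFinset, Set.ncard_coe_finset]
  have hmt : t ≤ m := by
    have h5 : t * 1 ≤ t * (n - t) := Nat.mul_le_mul_left t (by omega)
    omega
  have hinside : ((G.edgeFinset).filter (fun e => ∀ x ∈ e, x ∈ Wf)).card ≤ t - 2 :=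
    inside_bound n m t ht htn hn h2 Wf hWfcard G hmE hcross'
  have himg : ∀ c : Sym2 V → ℕ, (c '' G.edgeSet).ncard = (G.edgeFinset.image c).card := by
    intro c
    rw [← SimpleGraph.coe_edgeFinset, ← Finset.coe_image, Set.ncard_coe_finset]
  have hub : ∀ x ∈ {k | ∃ c : Sym2 V → ℕ, IsMCColoring G c ∧ (c '' G.edgeSet).ncard = k},
      x ≤ m - t + 1 := by
    rintro x ⟨c, hcmc, rfl⟩
    have h6 := upper_bound t ht Wf hWfcard G hinside c hcmc
    have h7 := himg c
    omega
  have hmem : (m - t + 1) ∈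
      {k | ∃ c : Sym2 V → ℕ, IsMCColoring G c ∧ (c '' G.edgeSet).ncard = k} := by
    have hlt : Wf.card < Fintype.card V := by omega
    obtain ⟨c, hmc, hcard⟩ := lower_bound t ht Wf hWfcard hlt G hcross'
    refine ⟨c, hmc, ?_⟩
    rw [himg c, hcard]
    omega
  have hbdd : BddAbove {k | ∃ c : Sym2 V → ℕ, IsMCColoring G c ∧ (c '' G.edgeSet).ncard = k} := by
    refine ⟨m, ?_⟩
    rintro x ⟨c, hcmc, rfl⟩
    calc (c '' G.edgeSet).ncard ≤ G.edgeSet.ncard := Set.ncard_image_le (Set.toFinite _)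
      _ = m := hm.symm
  have heq : mcNumber G = m - t + 1 := by
    rw [mcNumber]
    exact le_antisymm (csSup_le ⟨m - t + 1, hmem⟩ hub) (le_csSup hbdd hmem)
  rw [heq]
  omega
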